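/- With m = 2 products, fix initial market shares and suppose all customers are monotone and competitively weakly herding. Then the probability that product 1's market share strictly exceeds product 2's after round t is non-decreasing in q_1 (holding q_2 fixed). -/

import Mathlib

/-- Round outcomes: success, no consumption, failure. -/
inductive Ev : Type
  | S : Ev
  | N : Ev
  | F : Ev
deriving DecidableEq

instance instFintypeEv : Fintype Ev :=
  ⟨{Ev.S, Ev.N, Ev.F}, fun x => by cases x <;> simp⟩

/-- A history is a finite sequence of round outcomes. -/
abbrev Hist := List Ev

/-- The digest of a history: the subsequence of non-`N` entries. -/
def dig (Z : Hist) : Hist := Z.filter (fun v => v ≠ Ev.N)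

/-- Consumption: the number of non-`N` entries. -/
def con (Z : Hist) : ℕ := (dig Z).length

/-- Number of successes. -/
def Scount (Z : Hist) : ℕ := (Z.filter (fun v => v = Ev.S)).length

/-- Number of failures. -/
def Fcount (Z : Hist) : ℕ := (Z.filter (fun v => v = Ev.F)).length

/-- `Superior Z1 Z2` : equal depth, equal consumption, and no digest index
where `Z1` has `F` while `Z2` has `S`. -/
def Superior (Z1 Z2 : Hist) : Prop :=
  Z1.length = Z2.length ∧ con Z1 = con Z2 ∧
    ∀ i : ℕ, ¬ ((dig Z1)[i]? = some Ev.F ∧ (dig Z2)[i]? = some Ev.S)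

/-- Helper for the ex-ante function: current prefix, remaining events. -/
def exAnteFrom (σ : Hist → ℝ) : Hist → Hist → ℝ
  | _, [] => 1
  | pre, v :: rest =>
      (if v = Ev.N then 1 - σ pre else σ pre) * exAnteFrom σ (pre ++ [v]) rest

/-- The ex-ante function `c` of a partiality strategy `σ`:
`c(empty)=1`, `c(ZV)=σ(Z)c(Z)` for `V∈{S,F}`, `c(ZN)=(1-σ(Z))c(Z)`. -/
def exAnte (σ : Hist → ℝ) (Z : Hist) : ℝ := exAnteFrom σ [] Z

/-- Probability of a full history under the Markov chain with quality `q`. -/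
def histProb (σ : Hist → ℝ) (q : ℝ) (Z : Hist) : ℝ :=
  exAnte σ Z * q ^ Scount Z * (1 - q) ^ Fcount Z

/-- A strategy takes values in `[0,1]`. -/
def ValidStrat (σ : Hist → ℝ) : Prop := ∀ Z, σ Z ∈ Set.Icc (0 : ℝ) 1

/-- A monotone partiality strategy. -/
def MonotoneStrat (σ : Hist → ℝ) : Prop :=
  ∀ Z1 Z2, Superior Z1 Z2 → σ Z2 ≤ σ Z1

/-- A `t`-deep history ensemble: a history for each product `i ∈ [m]` and
customer `j ∈ [n]`. -/
abbrev Ens (m n t : ℕ) := Fin m → Fin n → Fin t → Ev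

/-- Market share of product `i` after round `k`, with initial shares `A`. -/
def shareAt {m n t : ℕ} (Z : Ens m n t) (A : Fin m → ℕ) (k : ℕ) (i : Fin m) : ℕ :=
  A i + ∑ j : Fin n, con ((List.ofFn (Z i j)).take k)

/-- Probability of a history ensemble: at round `k+1`, customer `j` consumes
product `i` with probability `σ i j` applied to her history with `i` and the
round-`k` market-share vector; consumption is a success with probability `q i`. -/
def ensProb {m n t : ℕ} (σ : Fin m → Fin n → Hist → (Fin m → ℕ) → ℝ)
    (q : Fin m → ℝ) (A : Fin m → ℕ) (Z : Ens m n t) : ℝ :=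
  ∏ i : Fin m, ∏ j : Fin n, ∏ k : Fin t,
    (match Z i j k with
      | Ev.N => 1 - σ i j ((List.ofFn (Z i j)).take k) (shareAt Z A k)
      | Ev.S => q i * σ i j ((List.ofFn (Z i j)).take k) (shareAt Z A k)
      | Ev.F => (1 - q i) * σ i j ((List.ofFn (Z i j)).take k) (shareAt Z A k))

/-- Monotonicity in history, for fixed market-share vector. -/
def MonotoneStratMS {m : ℕ} (σ : Hist → (Fin m → ℕ) → ℝ) : Prop :=
  ∀ (ω : Fin m → ℕ) (Z1 Z2 : Hist), Superior Z1 Z2 → σ Z2 ω ≤ σ Z1 ω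

/-- Weak herding for product `i`: the strategy is non-decreasing in `ω i` and
independent of the other coordinates of the market-share vector. -/
def WeaklyHerding {m : ℕ} (i : Fin m) (σ : Hist → (Fin m → ℕ) → ℝ) : Prop :=
  ∀ (Z : Hist) (ω ω' : Fin m → ℕ), ω i ≤ ω' i → σ Z ω ≤ σ Z ω'

/-- Competitive weak herding for product `i`: non-decreasing in `ω i` and
non-increasing in `ω k` for every `k ≠ i`. -/
def CompWeaklyHerding {m : ℕ} (i : Fin m) (σ : Hist → (Fin m → ℕ) → ℝ) : Prop :=
  ∀ (Z : Hist) (ω ω' : Fin m → ℕ), ω i ≤ ω' i →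
    (∀ k, k ≠ i → ω' k ≤ ω k) → σ Z ω ≤ σ Z ω'

/-! ### Auxiliary development -/

section Aux
open Finset

/-- letter corresponding to a success bit -/
def ltr (b : Bool) : Ev := if b then Ev.S else Ev.F

lemma ltr_ne_N (b : Bool) : ltr b ≠ Ev.N := by cases b <;> simp [ltr]

lemma dig_append (L M : Hist) : dig (L ++ M) = dig L ++ dig M := by
  simp [dig, List.filter_append]

lemma dig_append_N (L : Hist) : dig (L ++ [Ev.N]) = dig L := by
  simp [dig_append, dig]

lemma dig_append_ne (L : Hist) {v : Ev} (h : v ≠ Ev.N) : dig (L ++ [v]) = dig L ++ [v] := by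
  rw [dig_append]; congr 1; simp [dig, h]

lemma con_append_N (L : Hist) : con (L ++ [Ev.N]) = con L := by
  simp [con, dig_append_N]

lemma con_append_ne (L : Hist) {v : Ev} (h : v ≠ Ev.N) : con (L ++ [v]) = con L + 1 := by
  simp [con, dig_append_ne L h]

lemma con_le_length (L : Hist) : con L ≤ L.length := by
  simpa [con, dig] using List.length_filter_le _ L

lemma con_nil : con ([] : Hist) = 0 := rfl

/-- the abstract index types -/
abbrev XX (n : ℕ) := Fin 2 × Fin n
abbrev II (n t : ℕ) := Fin 2 × Fin n × Fin t

def wAt {n t : ℕ} (W : II n t → Bool) (x : XX n) (c : ℕ) : Bool :=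
  if h : c < t then W (x.1, x.2, ⟨c, h⟩) else true

def shl {n : ℕ} (A : Fin 2 → ℕ) (P : XX n → Hist) : Fin 2 → ℕ :=
  fun i => A i + ∑ j : Fin n, con (P (i, j))

def mw (q p : ℝ) : Ev → ℝ
  | Ev.N => 1 - p
  | Ev.S => q * p
  | Ev.F => (1 - q) * p

def dwt (p : ℝ) (b : Bool) : ℝ := if b then p else 1 - p

def bwt (q : ℝ) (b : Bool) : ℝ := if b then q else 1 - q

def appE {n : ℕ} (P : XX n → Hist) (e : XX n → Ev) : XX n → Hist := fun x => P x ++ [e x]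

end Aux
section Rec
open Finset

variable {n t : ℕ}

noncomputable def Val (σ : Fin 2 → Fin n → Hist → (Fin 2 → ℕ) → ℝ) (q : Fin 2 → ℝ)
    (A : Fin 2 → ℕ) : ℕ → (XX n → Hist) → ℝ
  | 0, P => if shl A P 1 < shl A P 0 then 1 else 0
  | r+1, P => ∑ e : XX n → Ev,
      (∏ x : XX n, mw (q x.1) (σ x.1 x.2 (P x) (shl A P)) (e x)) * Val σ q A r (appE P e)

noncomputable def stepD (W : II n t → Bool) (P : XX n → Hist) (δ : XX n → Bool) : XX n → Hist :=
  fun x => P x ++ [if δ x then ltr (wAt W x (con (P x))) else Ev.N]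

noncomputable def Dval (σ : Fin 2 → Fin n → Hist → (Fin 2 → ℕ) → ℝ) (A : Fin 2 → ℕ)
    (W : II n t → Bool) : ℕ → (XX n → Hist) → ℝ
  | 0, P => if shl A P 1 < shl A P 0 then 1 else 0
  | r+1, P => ∑ δ : XX n → Bool,
      (∏ x : XX n, dwt (σ x.1 x.2 (P x) (shl A P)) (δ x)) * Dval σ A W r (stepD W P δ)

noncomputable def μm (f : II n t → ℝ) (W : II n t → Bool) : ℝ := ∏ y : II n t, bwt (f y) (W y)

end Rec

section SumProd
open Finset
variable {E : Type*} [Fintype E]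

noncomputable def Rrec (w : List E → E → ℝ) (Φ : List E → ℝ) : ℕ → List E → ℝ
  | 0, L => Φ L
  | r+1, L => ∑ e : E, w L e * Rrec w Φ r (L ++ [e])

lemma Rrec_eq (w : List E → E → ℝ) (Φ : List E → ℝ) :
    ∀ (r : ℕ) (L : List E), Rrec w Φ r L =
      ∑ f : Fin r → E,
        (∏ k : Fin r, w (L ++ (List.ofFn f).take k.val) (f k)) * Φ (L ++ List.ofFn f) := by
  intro r
  induction r with
  | zero =>
    intro L
    rw [Fintype.sum_eq_single (Fin.elim0 : Fin 0 → E)]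
    · simp [Rrec]
    · intro f hf; exact absurd (Subsingleton.elim f Fin.elim0) hf
  | succ r ih =>
    intro L
    rw [show Rrec w Φ (r+1) L = ∑ e : E, w L e * Rrec w Φ r (L ++ [e]) from rfl]
    rw [← (Fin.consEquiv (fun _ : Fin (r+1) => E)).sum_comp]
    rw [Fintype.sum_prod_type]
    refine Finset.sum_congr rfl fun e _ => ?_
    rw [ih (L ++ [e]), Finset.mul_sum]
    refine Finset.sum_congr rfl fun g _ => ?_
    have hofn : List.ofFn ((Fin.consEquiv (fun _ : Fin (r+1) => E)) (e, g)) = e :: List.ofFn g := by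
      rw [List.ofFn_succ]; rfl
    rw [hofn, Fin.prod_univ_succ, ← mul_assoc]
    congr 1
    · congr 1
      · simp
      refine Finset.prod_congr rfl fun k _ => ?_
      have h1 : (e :: List.ofFn g).take (k.succ.val) = e :: (List.ofFn g).take k.val := rfl
      rw [h1]
      have h2 : L ++ e :: (List.ofFn g).take k.val = (L ++ [e]) ++ (List.ofFn g).take k.val := by
        simp
      rw [h2]
      rfl
    · congr 1
      simp
end SumProd
section LemA
open Finset

variable {n t : ℕ} (A : Fin 2 → ℕ) (σ : Fin 2 → Fin n → Hist → (Fin 2 → ℕ) → ℝ)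
  (q : Fin 2 → ℝ)

def projL (L : List (XX n → Ev)) : XX n → Hist := fun x => L.map (fun e => e x)

noncomputable def wA (L : List (XX n → Ev)) (e : XX n → Ev) : ℝ :=
  ∏ x : XX n, mw (q x.1) (σ x.1 x.2 (projL L x) (shl A (projL L))) (e x)

noncomputable def ΦA (L : List (XX n → Ev)) : ℝ :=
  if shl A (projL L) 1 < shl A (projL L) 0 then 1 else 0

lemma projL_append (L : List (XX n → Ev)) (e : XX n → Ev) :
    projL (L ++ [e]) = appE (projL L) e := by
  funext x; simp [projL, appE]

lemma Rrec_eq_Val : ∀ (r : ℕ) (L : List (XX n → Ev)),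
    Rrec (wA A σ q) (ΦA A) r L = Val σ q A r (projL L) := by
  intro r
  induction r with
  | zero => intro L; rfl
  | succ r ih =>
    intro L
    show ∑ e : XX n → Ev, wA A σ q L e * Rrec _ _ r (L ++ [e]) = _
    rw [show Val σ q A (r+1) (projL L) = ∑ e : XX n → Ev,
      (∏ x : XX n, mw (q x.1) (σ x.1 x.2 (projL L x) (shl A (projL L))) (e x)) *
        Val σ q A r (appE (projL L) e) from rfl]
    refine Finset.sum_congr rfl fun e _ => ?_
    rw [ih (L ++ [e]), projL_append]
    rfl

lemma take_proj (f : Fin t → XX n → Ev) (x : XX n) (m : ℕ) :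
    projL ((List.ofFn f).take m) x = (List.ofFn (fun k => f k x)).take m := by
  simp only [projL, List.map_take, List.map_ofFn]; rfl

lemma lemA :
    (∑ Z : Ens 2 n t, if shareAt Z A t 1 < shareAt Z A t 0 then ensProb σ q A Z else 0)
      = Val σ q A t (fun _ => ([] : Hist)) := by
  have hEquiv : ∑ Z : Ens 2 n t,
      (if shareAt Z A t 1 < shareAt Z A t 0 then ensProb σ q A Z else 0)
      = ∑ f : Fin t → XX n → Ev,
        (∏ k : Fin t, wA A σ q ((List.ofFn f).take k.val) (f k)) * ΦA A (List.ofFn f) := by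
    apply Fintype.sum_bijective (fun (Z : Ens 2 n t) => (fun k x => Z x.1 x.2 k : Fin t → XX n → Ev))
    · constructor
      · intro Z1 Z2 h
        funext i j k
        exact congrFun (congrFun h k) (i, j)
      · intro f
        exact ⟨fun i j k => f k (i, j), rfl⟩
    intro Z
    have hproj : ∀ (i : Fin 2) (j : Fin n) (m : ℕ),
        projL ((List.ofFn (fun k x => Z x.1 x.2 k : Fin t → XX n → Ev)).take m) (i, j)
          = (List.ofFn (Z i j)).take m := by
      intro i j m; rw [take_proj]
    have hshl : ∀ m : ℕ, shl A (projL ((List.ofFn (fun k x => Z x.1 x.2 k : Fin t → XX n → Ev)).take m))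
        = shareAt Z A m := by
      intro m; funext i
      simp only [shl, shareAt]
      congr 1
      exact Finset.sum_congr rfl fun j _ => by rw [hproj]
    have hens : ensProb σ q A Z
        = ∏ k : Fin t, wA A σ q ((List.ofFn (fun k x => Z x.1 x.2 k : Fin t → XX n → Ev)).take k.val)
            ((fun k x => Z x.1 x.2 k : Fin t → XX n → Ev) k) := by
      rw [ensProb]
      rw [show (∏ i : Fin 2, ∏ j : Fin n, ∏ k : Fin t,
        (match Z i j k with
          | Ev.N => 1 - σ i j ((List.ofFn (Z i j)).take k) (shareAt Z A k)
          | Ev.S => q i * σ i j ((List.ofFn (Z i j)).take k) (shareAt Z A k)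
          | Ev.F => (1 - q i) * σ i j ((List.ofFn (Z i j)).take k) (shareAt Z A k)))
        = ∏ i : Fin 2, ∏ j : Fin n, ∏ k : Fin t,
            mw (q i) (σ i j ((List.ofFn (Z i j)).take k.val) (shareAt Z A k.val)) (Z i j k) from by
          refine Finset.prod_congr rfl fun i _ => Finset.prod_congr rfl fun j _ =>
            Finset.prod_congr rfl fun k _ => ?_
          cases h : Z i j k <;> simp [mw, h]]
      rw [show (∏ i : Fin 2, ∏ j : Fin n, ∏ k : Fin t,
            mw (q i) (σ i j ((List.ofFn (Z i j)).take k.val) (shareAt Z A k.val)) (Z i j k))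
          = ∏ k : Fin t, ∏ i : Fin 2, ∏ j : Fin n,
            mw (q i) (σ i j ((List.ofFn (Z i j)).take k.val) (shareAt Z A k.val)) (Z i j k) from by
          rw [show (∏ i : Fin 2, ∏ j : Fin n, ∏ k : Fin t,
            mw (q i) (σ i j ((List.ofFn (Z i j)).take k.val) (shareAt Z A k.val)) (Z i j k))
              = ∏ i : Fin 2, ∏ k : Fin t, ∏ j : Fin n,
            mw (q i) (σ i j ((List.ofFn (Z i j)).take k.val) (shareAt Z A k.val)) (Z i j k) from
            Finset.prod_congr rfl fun i _ => Finset.prod_comm]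
          exact Finset.prod_comm]
      refine Finset.prod_congr rfl fun k _ => ?_
      rw [wA, Fintype.prod_prod_type]
      refine Finset.prod_congr rfl fun i _ => Finset.prod_congr rfl fun j _ => ?_
      rw [hproj, hshl]
    have hΦ : ΦA A (List.ofFn (fun k x => Z x.1 x.2 k : Fin t → XX n → Ev))
        = (if shareAt Z A t 1 < shareAt Z A t 0 then (1:ℝ) else 0) := by
      rw [ΦA]
      have : projL (List.ofFn (fun k x => Z x.1 x.2 k : Fin t → XX n → Ev))
          = fun x => (List.ofFn (Z x.1 x.2)) := by
        funext x
        have := take_proj (fun k x => Z x.1 x.2 k : Fin t → XX n → Ev) x t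
        rwa [List.take_of_length_le (by simp), List.take_of_length_le (by simp)] at this
      rw [this]
      have hsh : ∀ i0 : Fin 2, A i0 + ∑ j : Fin n, con (List.ofFn (Z i0 j)) = shareAt Z A t i0 := by
        intro i0
        rw [shareAt]
        congr 1
        refine Finset.sum_congr rfl fun j _ => ?_
        rw [List.take_of_length_le (by simp)]
      simp only [shl, hsh]
    rw [hens, hΦ]
    rw [mul_ite, mul_one, mul_zero]
  rw [hEquiv]
  have := Rrec_eq (wA A σ q) (ΦA A) t []
  simp only [List.nil_append] at this
  rw [← this, Rrec_eq_Val]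
  rfl
end LemA
section Split
open Finset
open scoped Classical

variable {n t : ℕ}

lemma sum_bwt (c : ℝ) : ∑ b : Bool, bwt c b = 1 := by
  simp [bwt]

lemma bwt_nonneg {c : ℝ} (h : c ∈ Set.Icc (0:ℝ) 1) (b : Bool) : 0 ≤ bwt c b := by
  cases b <;> simp [bwt] <;> [linarith [h.2]; exact h.1]

lemma sum_μm (f : II n t → ℝ) : ∑ W : II n t → Bool, μm f W = 1 := by
  calc ∑ W : II n t → Bool, μm f W = ∑ W : II n t → Bool, ∏ y : II n t, bwt (f y) (W y) := rfl
    _ = ∏ y : II n t, ∑ b : Bool, bwt (f y) b := (Fintype.prod_sum _).symm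
    _ = 1 := by
        rw [show (1:ℝ) = ∏ _y : II n t, (1:ℝ) from (Finset.prod_const_one).symm]
        exact Finset.prod_congr rfl fun y _ => sum_bwt (f y)

def msplit (z : II n t) (a : Bool) (v : {y : II n t // y ≠ z} → Bool) : II n t → Bool :=
  fun y => if h : y = z then a else v ⟨y, h⟩

lemma msplit_self (z : II n t) (a v) : msplit z a v z = a := by simp [msplit]

lemma msplit_ne (z : II n t) (a v) (y : II n t) (h : y ≠ z) : msplit z a v y = v ⟨y, h⟩ := by
  simp [msplit, h]

lemma msplit_update (z : II n t) (a c : Bool) (v) :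
    msplit z c v = Function.update (msplit z a v) z c := by
  funext y
  by_cases h : y = z
  · subst h; simp [msplit]
  · simp [msplit, h, Function.update_of_ne h]

lemma sum_split (z : II n t) (F : (II n t → Bool) → ℝ) :
    ∑ W : II n t → Bool, F W
      = ∑ a : Bool, ∑ v : {y : II n t // y ≠ z} → Bool, F (msplit z a v) := by
  have h1 : ∑ W : II n t → Bool, F W
      = ∑ p : Bool × ({y : II n t // y ≠ z} → Bool), F ((Equiv.piSplitAt z (fun _ => Bool)).symm p) :=
    ((Equiv.piSplitAt z (fun _ => Bool)).symm.sum_comp F).symm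
  rw [h1, Fintype.sum_prod_type]
  refine Finset.sum_congr rfl fun a _ => Finset.sum_congr rfl fun v _ => ?_
  congr 1
  funext y
  by_cases h : y = z
  · subst h; simp [msplit]
  · simp [msplit, h]

lemma μm_msplit (f : II n t → ℝ) (z : II n t) (a : Bool) (v) :
    μm f (msplit z a v) = bwt (f z) a * ∏ u : {y : II n t // y ≠ z}, bwt (f u.1) (v u) := by
  rw [μm]
  rw [show (Finset.univ : Finset (II n t)) = insert z ({z}ᶜ : Finset (II n t)) from by
    rw [Finset.insert_compl_self]]
  rw [Finset.prod_insert (by simp)]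
  rw [msplit_self]
  congr 1
  rw [Finset.prod_subtype ({z}ᶜ : Finset (II n t)) (fun y => by simp : ∀ y : II n t, y ∈ ({z}ᶜ : Finset (II n t)) ↔ y ≠ z) (fun y => bwt (f y) (msplit z a v y))]
  exact Finset.prod_congr rfl fun u _ => by rw [msplit_ne z a v u.1 u.2]

end Split
section Ind
open Finset
open scoped Classical

variable {n t : ℕ}

/-- single coordinate resampling -/
lemma SPLITC (f : II n t → ℝ) (z : II n t) (a : Bool) (g : (II n t → Bool) → ℝ)
    (hg : ∀ (W : II n t → Bool) (c : Bool), g (Function.update W z c) = g W) :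
    ∑ W : II n t → Bool, μm f W * ((if W z = a then 1 else 0) * g W)
      = bwt (f z) a * ∑ W : II n t → Bool, μm f W * g W := by
  rw [sum_split z (fun W => μm f W * ((if W z = a then 1 else 0) * g W)),
      sum_split z (fun W => μm f W * g W)]
  have hgv : ∀ (c c' : Bool) (v), g (msplit z c v) = g (msplit z c' v) := by
    intro c c' v
    rw [msplit_update z c' c v, hg]
  have expand : ∀ c : Bool, ∑ v : {y : II n t // y ≠ z} → Bool, μm f (msplit z c v) * g (msplit z c v)
      = bwt (f z) c * ∑ v : {y : II n t // y ≠ z} → Bool,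
          (∏ u : {y : II n t // y ≠ z}, bwt (f u.1) (v u)) * g (msplit z true v) := by
    intro c
    rw [Finset.mul_sum]
    refine Finset.sum_congr rfl fun v _ => ?_
    rw [μm_msplit, hgv c true v]; ring
  have lhs : ∀ c : Bool, ∑ v : {y : II n t // y ≠ z} → Bool,
        μm f (msplit z c v) * ((if msplit z c v z = a then 1 else 0) * g (msplit z c v))
      = (if c = a then 1 else 0) * ∑ v : {y : II n t // y ≠ z} → Bool,
          μm f (msplit z c v) * g (msplit z c v) := by
    intro c
    rw [Finset.mul_sum]
    refine Finset.sum_congr rfl fun v _ => ?_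
    rw [msplit_self]; ring
  rw [Fintype.sum_bool, Fintype.sum_bool, lhs true, lhs false, expand true, expand false]
  cases a <;> norm_num [bwt] <;> exact Or.inl (by ring)

/-- resampling several coordinates -/
lemma IND (f : II n t → ℝ) (T : Finset (XX n)) (coord : XX n → II n t)
    (hinj : Function.Injective coord) (b : XX n → Bool) (g : (II n t → Bool) → ℝ)
    (hg : ∀ x ∈ T, ∀ (W : II n t → Bool) (c : Bool), g (Function.update W (coord x) c) = g W) :
    ∑ W : II n t → Bool, μm f W * ((if ∀ x ∈ T, W (coord x) = b x then 1 else 0) * g W)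
      = (∏ x ∈ T, bwt (f (coord x)) (b x)) * ∑ W : II n t → Bool, μm f W * g W := by
  induction T using Finset.induction with
  | empty => simp
  | insert x0 T hxT ih =>
    have hsplit : ∀ W : II n t → Bool,
        (if ∀ x ∈ insert x0 T, W (coord x) = b x then (1:ℝ) else 0)
          = (if ∀ x ∈ T, W (coord x) = b x then 1 else 0) * (if W (coord x0) = b x0 then 1 else 0) := by
      intro W
      by_cases h0 : W (coord x0) = b x0 <;> by_cases hT : ∀ x ∈ T, W (coord x) = b x <;>
        simp [h0, hT, Finset.forall_mem_insert]
    simp only [hsplit]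
    have step1 : ∑ W : II n t → Bool, μm f W *
          ((if ∀ x ∈ T, W (coord x) = b x then (1:ℝ) else 0) * (if W (coord x0) = b x0 then 1 else 0) * g W)
        = ∑ W : II n t → Bool, μm f W *
          ((if W (coord x0) = b x0 then (1:ℝ) else 0) *
            ((if ∀ x ∈ T, W (coord x) = b x then (1:ℝ) else 0) * g W)) := by
      refine Finset.sum_congr rfl fun W _ => by ring
    rw [step1, SPLITC f (coord x0) (b x0)
        (fun W => (if ∀ x ∈ T, W (coord x) = b x then (1:ℝ) else 0) * g W) ?_]
    · rw [ih (fun x hx => hg x (Finset.mem_insert_of_mem hx)), Finset.prod_insert hxT]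
      ring
    · intro W c
      have hupd : ∀ x ∈ T, Function.update W (coord x0) c (coord x) = W (coord x) := by
        intro x hx
        have hne : coord x ≠ coord x0 := by
          intro hh
          cases hinj hh
          exact hxT hx
        exact Function.update_of_ne hne _ _
      have hind : (if ∀ x ∈ T, Function.update W (coord x0) c (coord x) = b x then (1:ℝ) else 0)
          = (if ∀ x ∈ T, W (coord x) = b x then (1:ℝ) else 0) := by
        congr 1
        refine propext (forall₂_congr fun x hx => ?_)
        rw [hupd x hx]
      show (if ∀ x ∈ T, Function.update W (coord x0) c (coord x) = b x then (1:ℝ) else 0)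
            * g (Function.update W (coord x0) c)
          = (if ∀ x ∈ T, W (coord x) = b x then (1:ℝ) else 0) * g W
      rw [hind, hg x0 (Finset.mem_insert_self x0 T)]
end Ind
section Fut
open Finset

variable {n t : ℕ} (σ : Fin 2 → Fin n → Hist → (Fin 2 → ℕ) → ℝ) (A : Fin 2 → ℕ)

lemma con_stepD (W : II n t → Bool) (P : XX n → Hist) (δ : XX n → Bool) (x : XX n) :
    con (stepD W P δ x) = con (P x) + (if δ x then 1 else 0) := by
  by_cases h : δ x
  · simp only [stepD, h, if_true, ite_true]
    exact con_append_ne _ (ltr_ne_N _)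
  · simp only [stepD, h, if_false, ite_false]
    norm_num
    rw [con_append_N]

lemma con_stepD_le (W : II n t → Bool) (P : XX n → Hist) (δ : XX n → Bool) (x : XX n) :
    con (P x) ≤ con (stepD W P δ x) := by
  rw [con_stepD]; omega

lemma len_stepD (W : II n t → Bool) (P : XX n → Hist) (δ : XX n → Bool) (x : XX n) :
    (stepD W P δ x).length = (P x).length + 1 := by
  simp [stepD]

lemma wAt_update_ne {W : II n t → Bool} {x : XX n} {c : ℕ} {z : II n t} {a : Bool}
    (h : ∀ (hc : c < t), z ≠ (x.1, x.2, ⟨c, hc⟩)) :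
    wAt (Function.update W z a) x c = wAt W x c := by
  unfold wAt
  by_cases hc : c < t
  · rw [dif_pos hc, dif_pos hc, Function.update_of_ne]
    exact fun hh => (h hc) hh.symm
  · rw [dif_neg hc, dif_neg hc]

lemma FUT : ∀ (r : ℕ) (P : XX n → Hist) (W₁ W₂ : II n t → Bool),
    (∀ (x : XX n) (c : Fin t), con (P x) ≤ c.val → W₁ (x.1, x.2, c) = W₂ (x.1, x.2, c)) →
    Dval σ A W₁ r P = Dval σ A W₂ r P := by
  intro r
  induction r with
  | zero => intro P W₁ W₂ _; rfl
  | succ r ih =>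
    intro P W₁ W₂ hW
    show (∑ δ : XX n → Bool,
        (∏ x : XX n, dwt (σ x.1 x.2 (P x) (shl A P)) (δ x)) * Dval σ A W₁ r (stepD W₁ P δ))
      = ∑ δ : XX n → Bool,
        (∏ x : XX n, dwt (σ x.1 x.2 (P x) (shl A P)) (δ x)) * Dval σ A W₂ r (stepD W₂ P δ)
    refine Finset.sum_congr rfl fun δ _ => ?_
    have hstep : stepD W₁ P δ = stepD W₂ P δ := by
      funext x
      unfold stepD
      congr 2
      by_cases h : δ x
      · simp only [h, ite_true]
        congr 1
        unfold wAt
        by_cases hc : con (P x) < t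
        · rw [dif_pos hc, dif_pos hc, hW x ⟨con (P x), hc⟩ (le_refl _)]
        · rw [dif_neg hc, dif_neg hc]
      · simp [h]
    rw [hstep]
    congr 1
    exact ih (stepD W₂ P δ) W₁ W₂ (fun x c hc =>
      hW x c (le_trans (by rw [← hstep]; exact (con_stepD_le W₁ P δ x).trans (by rw [hstep])) hc))
end Fut
section LemB
open Finset
open scoped Classical

variable {n t : ℕ} (σ : Fin 2 → Fin n → Hist → (Fin 2 → ℕ) → ℝ) (q : Fin 2 → ℝ) (A : Fin 2 → ℕ)

def shD (e : XX n → Ev) (x : XX n) : Bool :=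
  match e x with
  | Ev.N => false
  | _ => true

def shB (e : XX n → Ev) (x : XX n) : Bool :=
  match e x with
  | Ev.S => true
  | Ev.F => false
  | Ev.N => true

def eOf (δ b : XX n → Bool) (x : XX n) : Ev := if δ x then ltr (b x) else Ev.N

def compatDB (δ b : XX n → Bool) : Prop := ∀ x : XX n, δ x = false → b x = true

lemma eOf_sh (e : XX n → Ev) : eOf (shD e) (shB e) = e := by
  funext x
  unfold eOf shD shB ltr
  cases e x <;> simp

lemma sh_eOf (δ b : XX n → Bool) (hc : compatDB δ b) : shD (eOf δ b) = δ ∧ shB (eOf δ b) = b := by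
  constructor
  · funext x
    cases hδ : δ x <;> cases hb : b x <;> simp [shD, eOf, ltr, hδ, hb]
  · funext x
    cases hδ : δ x <;> cases hb : b x <;> simp [shB, eOf, ltr, hδ, hb] <;>
      exact absurd (hc x hδ) (by simp [hb])

lemma compat_sh (e : XX n → Ev) : compatDB (shD e) (shB e) := by
  intro x hx
  unfold shD at hx
  unfold shB
  cases he : e x <;> simp [he] at hx ⊢

lemma partition_e (F : (XX n → Ev) → ℝ) :
    ∑ e : XX n → Ev, F e
      = ∑ δ : XX n → Bool, ∑ b : XX n → Bool,
          (if compatDB δ b then F (eOf δ b) else 0) := by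
  have h1 : ∀ e : XX n → Ev, F e
      = ∑ δ : XX n → Bool, ∑ b : XX n → Bool,
          (if δ = shD e ∧ b = shB e then F e else 0) := by
    intro e
    rw [Finset.sum_eq_single (shD e)]
    · rw [Finset.sum_eq_single (shB e)]
      · simp
      · intro b _ hb; rw [if_neg (by tauto)]
      · intro h; exact absurd (Finset.mem_univ _) h
    · intro δ _ hδ
      rw [Finset.sum_eq_zero]
      intro b _; rw [if_neg (by tauto)]
    · intro h; exact absurd (Finset.mem_univ _) h
  rw [Finset.sum_congr rfl fun e _ => h1 e, Finset.sum_comm]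
  refine Finset.sum_congr rfl fun δ _ => ?_
  rw [Finset.sum_comm]
  refine Finset.sum_congr rfl fun b _ => ?_
  by_cases hc : compatDB δ b
  · rw [if_pos hc, Finset.sum_eq_single (eOf δ b)]
    · rw [if_pos ⟨(sh_eOf δ b hc).1.symm, (sh_eOf δ b hc).2.symm⟩]
    · intro e _ he
      rw [if_neg]
      rintro ⟨h1', h2'⟩
      exact he (by rw [h1', h2', eOf_sh])
    · intro h; exact absurd (Finset.mem_univ _) h
  · rw [if_neg hc, Finset.sum_eq_zero]
    intro e _
    rw [if_neg]
    rintro ⟨h1', h2'⟩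
    exact hc (h1' ▸ h2' ▸ compat_sh e)
lemma lemB : ∀ (r k : ℕ) (P : XX n → Hist), (∀ x, (P x).length = k) → k + r ≤ t →
    Val σ q A r P = ∑ W : II n t → Bool, μm (fun y : II n t => q y.1) W * Dval σ A W r P := by
  intro r
  induction r with
  | zero =>
    intro k P _ _
    show (if shl A P 1 < shl A P 0 then (1:ℝ) else 0) = ∑ W : II n t → Bool,
        μm (fun y : II n t => q y.1) W * (if shl A P 1 < shl A P 0 then (1:ℝ) else 0)
    rw [← Finset.sum_mul, sum_μm, one_mul]
  | succ r ih =>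
    intro k P hlen hbound
    have hck : ∀ x : XX n, con (P x) < t := fun x =>
      lt_of_le_of_lt ((con_le_length (P x)).trans_eq (hlen x)) (by omega)
    set p : XX n → ℝ := fun x => σ x.1 x.2 (P x) (shl A P) with hp
    set coord : XX n → II n t := fun x => (x.1, x.2, ⟨con (P x), hck x⟩) with hcoord
    have hcoordinj : Function.Injective coord := by
      intro x1 x2 h
      rw [hcoord] at h
      simp only [Prod.mk.injEq] at h
      exact Prod.ext h.1 h.2.1
    set qq : II n t → ℝ := fun y => q y.1 with hqq
    -- LHS expansion
    have hIH : ∀ e : XX n → Ev, Val σ q A r (appE P e)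
        = ∑ W : II n t → Bool, μm qq W * Dval σ A W r (appE P e) := by
      intro e
      exact ih (k+1) (appE P e) (fun x => by simp [appE, hlen x]) (by omega)
    have hL : Val σ q A (r+1) P
        = ∑ e : XX n → Ev, (∏ x : XX n, mw (q x.1) (p x) (e x)) *
            ∑ W : II n t → Bool, μm qq W * Dval σ A W r (appE P e) := by
      show (∑ e : XX n → Ev, (∏ x : XX n, mw (q x.1) (p x) (e x)) * Val σ q A r (appE P e)) = _
      exact Finset.sum_congr rfl fun e _ => by rw [hIH e]
    -- RHS expansion
    have hR : (∑ W : II n t → Bool, μm qq W * Dval σ A W (r+1) P)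
        = ∑ δ : XX n → Bool, (∏ x : XX n, dwt (p x) (δ x)) *
            (∑ W : II n t → Bool, μm qq W * Dval σ A W r (stepD W P δ)) := by
      have : ∀ W : II n t → Bool, μm qq W * Dval σ A W (r+1) P
          = ∑ δ : XX n → Bool, (∏ x : XX n, dwt (p x) (δ x)) *
              (μm qq W * Dval σ A W r (stepD W P δ)) := by
        intro W
        show μm qq W * (∑ δ : XX n → Bool, (∏ x : XX n, dwt (p x) (δ x)) * Dval σ A W r (stepD W P δ)) = _
        rw [Finset.mul_sum]
        exact Finset.sum_congr rfl fun δ _ => by ring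
      rw [Finset.sum_congr rfl fun W _ => this W, Finset.sum_comm]
      exact Finset.sum_congr rfl fun δ _ => by rw [Finset.mul_sum]
    -- per-δ resampling identity
    have hδkey : ∀ δ : XX n → Bool,
        (∑ W : II n t → Bool, μm qq W * Dval σ A W r (stepD W P δ))
        = ∑ b : XX n → Bool, (if compatDB δ b then
            (∏ x ∈ Finset.univ.filter (fun x : XX n => δ x = true), bwt (q x.1) (b x)) *
              ∑ W : II n t → Bool, μm qq W * Dval σ A W r (appE P (eOf δ b)) else 0) := by
      intro δ
      -- canonical letter vector
      set cb : (II n t → Bool) → XX n → Bool :=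
        fun W x => if δ x then wAt W x (con (P x)) else true with hcb
      have hpart : ∀ W : II n t → Bool, μm qq W * Dval σ A W r (stepD W P δ)
          = ∑ b : XX n → Bool, (if b = cb W then (1:ℝ) else 0) * (μm qq W * Dval σ A W r (stepD W P δ)) := by
        intro W
        rw [Finset.sum_eq_single (cb W)]
        · rw [if_pos rfl, one_mul]
        · intro b _ hb; rw [if_neg hb, zero_mul]
        · intro h; exact absurd (Finset.mem_univ _) h
      rw [Finset.sum_congr rfl fun W _ => hpart W, Finset.sum_comm]
      refine Finset.sum_congr rfl fun b _ => ?_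
      -- rewrite the Dval argument on the support
      have hsupp : ∀ W : II n t → Bool, (if b = cb W then (1:ℝ) else 0) * (μm qq W * Dval σ A W r (stepD W P δ))
          = μm qq W * ((if b = cb W then (1:ℝ) else 0) * Dval σ A W r (appE P (eOf δ b))) := by
        intro W
        by_cases hbc : b = cb W
        · have hstep : stepD W P δ = appE P (eOf δ b) := by
            funext x
            unfold stepD appE eOf
            congr 1
            by_cases hδx : δ x
            · simp only [hδx, ite_true, if_true]
              rw [hbc, hcb]
              simp [hδx]
            · simp [hδx]
          rw [hstep]; ring
        · rw [if_neg hbc]; ring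
      rw [Finset.sum_congr rfl fun W _ => hsupp W]
      -- split the indicator
      have hindsplit : ∀ W : II n t → Bool, (if b = cb W then (1:ℝ) else 0)
          = (if ∀ x ∈ Finset.univ.filter (fun x : XX n => δ x = true), W (coord x) = b x then (1:ℝ) else 0)
            * (if compatDB δ b then (1:ℝ) else 0) := by
        intro W
        have hiff : b = cb W ↔
            ((∀ x ∈ Finset.univ.filter (fun x : XX n => δ x = true), W (coord x) = b x) ∧ compatDB δ b) := by
          constructor
          · intro h
            constructor
            · intro x hx
              have hδx : δ x = true := (Finset.mem_filter.mp hx).2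
              have := congrFun h x
              rw [hcb] at this
              simp only [hδx, if_true, ite_true] at this
              rw [this]
              unfold wAt
              rw [dif_pos (hck x)]
            · intro x hδx
              have := congrFun h x
              rw [hcb] at this
              simp only [hδx] at this
              simpa using this
          · rintro ⟨h1', h2'⟩
            funext x
            rw [hcb]
            by_cases hδx : δ x
            · simp only [hδx, ite_true, if_true]
              have := h1' x (by simp [hδx])
              rw [← this]
              unfold wAt
              rw [dif_pos (hck x)]
            · simp only [hδx, ite_false, if_false]
              exact h2' x (by simpa using hδx)
        by_cases h : b = cb W
        · rw [if_pos h, if_pos (hiff.mp h).1, if_pos (hiff.mp h).2, one_mul]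
        · rw [if_neg h]
          by_cases h1' : ∀ x ∈ Finset.univ.filter (fun x : XX n => δ x = true), W (coord x) = b x
          · by_cases h2' : compatDB δ b
            · exact absurd (hiff.mpr ⟨h1', h2'⟩) h
            · rw [if_neg h2', mul_zero]
          · rw [if_neg h1', zero_mul]
      by_cases hcompat : compatDB δ b
      · rw [if_pos hcompat]
        have : ∀ W : II n t → Bool, μm qq W * ((if b = cb W then (1:ℝ) else 0) * Dval σ A W r (appE P (eOf δ b)))
            = μm qq W * ((if ∀ x ∈ Finset.univ.filter (fun x : XX n => δ x = true), W (coord x) = b x then (1:ℝ) else 0)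
                * Dval σ A W r (appE P (eOf δ b))) := by
          intro W
          rw [hindsplit W, if_pos hcompat, mul_one]
        rw [Finset.sum_congr rfl fun W _ => this W]
        refine IND qq (Finset.univ.filter (fun x : XX n => δ x = true)) coord hcoordinj b
          (fun W => Dval σ A W r (appE P (eOf δ b))) ?_
        -- independence of the consumed coordinate
        intro x hx W c
        have hδx : δ x = true := (Finset.mem_filter.mp hx).2
        refine FUT σ A r (appE P (eOf δ b)) _ _ ?_
        intro x' c' hc'
        have hconx' : con (appE P (eOf δ b) x') = con (P x') + (if δ x' then 1 else 0) := by
          unfold appE eOf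
          by_cases hδx' : δ x'
          · simp only [hδx', ite_true, if_true]
            exact con_append_ne _ (ltr_ne_N _)
          · simp only [hδx', ite_false, if_false]
            norm_num
            exact con_append_N _
        apply Function.update_of_ne
        rw [hcoord]
        intro hh
        simp only [Prod.mk.injEq] at hh
        have hx'x : x' = x := Prod.ext hh.1 hh.2.1
        subst hx'x
        have : c'.val = con (P x') := by rw [hh.2.2]
        rw [hconx', hδx] at hc'
        simp at hc'
        omega
      · rw [if_neg hcompat, Finset.sum_eq_zero]
        intro W _
        rw [hindsplit W, if_neg hcompat, mul_zero, zero_mul, mul_zero]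
    -- now combine
    rw [hL, hR]
    have hRHS : (∑ δ : XX n → Bool, (∏ x : XX n, dwt (p x) (δ x)) *
          (∑ W : II n t → Bool, μm qq W * Dval σ A W r (stepD W P δ)))
        = ∑ δ : XX n → Bool, (∏ x : XX n, dwt (p x) (δ x)) *
            ∑ b : XX n → Bool, (if compatDB δ b then
              (∏ x ∈ Finset.univ.filter (fun x : XX n => δ x = true), bwt (q x.1) (b x)) *
                ∑ W : II n t → Bool, μm qq W * Dval σ A W r (appE P (eOf δ b)) else 0) :=
      Finset.sum_congr rfl fun δ _ => by rw [hδkey δ]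
    rw [hRHS]
    refine Eq.trans (partition_e (fun e => (∏ x : XX n, mw (q x.1) (p x) (e x)) *
        ∑ W : II n t → Bool, μm qq W * Dval σ A W r (appE P e))) ?_
    refine Finset.sum_congr rfl fun δ _ => ?_
    rw [Finset.mul_sum]
    refine Finset.sum_congr rfl fun b _ => ?_
    by_cases hcompat : compatDB δ b
    · rw [if_pos hcompat, if_pos hcompat]
      have hweight : (∏ x : XX n, mw (q x.1) (p x) (eOf δ b x))
          = (∏ x : XX n, dwt (p x) (δ x)) *
              ∏ x ∈ Finset.univ.filter (fun x : XX n => δ x = true), bwt (q x.1) (b x) := by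
        rw [Finset.prod_filter]
        rw [← Finset.prod_mul_distrib]
        refine Finset.prod_congr rfl fun x _ => ?_
        by_cases hδx : δ x
        · cases hbx : b x <;>
            simp [eOf, ltr, mw, dwt, bwt, hδx, hbx] <;> ring
        · simp [eOf, mw, dwt, hδx]
      rw [hweight]; ring
    · rw [if_neg hcompat, if_neg hcompat, mul_zero]
section Couple
open Finset

variable {X : Type*} [Fintype X] [DecidableEq X]

lemma MARG (ν : X → Bool → Bool → ℝ) (h : (X → Bool) → ℝ) :
    ∑ γ : X → Bool × Bool, (∏ x : X, ν x (γ x).1 (γ x).2) * h (fun x => (γ x).1)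
      = ∑ δ : X → Bool, (∏ x : X, ∑ c : Bool, ν x (δ x) c) * h δ := by
  rw [← (Equiv.arrowProdEquivProdArrow X (fun _ => Bool) (fun _ => Bool)).symm.sum_comp
    (fun γ : X → Bool × Bool => (∏ x : X, ν x (γ x).1 (γ x).2) * h (fun x => (γ x).1))]
  rw [Fintype.sum_prod_type]
  refine Finset.sum_congr rfl fun δ _ => ?_
  have : ∀ β : X → Bool,
      (∏ x : X, ν x (((Equiv.arrowProdEquivProdArrow X (fun _ => Bool) (fun _ => Bool)).symm (δ, β)) x).1
          (((Equiv.arrowProdEquivProdArrow X (fun _ => Bool) (fun _ => Bool)).symm (δ, β)) x).2) *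
        h (fun x => (((Equiv.arrowProdEquivProdArrow X (fun _ => Bool) (fun _ => Bool)).symm (δ, β)) x).1)
      = (∏ x : X, ν x (δ x) (β x)) * h δ := by
    intro β
    congr 1
  rw [Finset.sum_congr rfl fun β _ => this β, ← Finset.sum_mul, ← Fintype.prod_sum
    (fun x (c : Bool) => ν x (δ x) c)]

lemma MARG2 (ν : X → Bool → Bool → ℝ) (h : (X → Bool) → ℝ) :
    ∑ γ : X → Bool × Bool, (∏ x : X, ν x (γ x).1 (γ x).2) * h (fun x => (γ x).2)
      = ∑ δ : X → Bool, (∏ x : X, ∑ c : Bool, ν x c (δ x)) * h δ := by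
  have hbij : Function.Bijective (fun (γ : X → Bool × Bool) (x : X) => ((γ x).2, (γ x).1)) := by
    have hinv : Function.Involutive (fun (γ : X → Bool × Bool) (x : X) => ((γ x).2, (γ x).1)) := by
      intro γ; funext x; simp
    exact hinv.bijective
  refine Eq.trans ?_ (MARG (fun x a b => ν x b a) h)
  refine Fintype.sum_bijective _ hbij _ _ fun γ => ?_
  congr 1

lemma couple_le (ν : X → Bool → Bool → ℝ) (F G : (X → Bool) → ℝ)
    (hnn : ∀ x a b, 0 ≤ ν x a b)
    (hsupp : ∀ γ : X → Bool × Bool, (∀ x, ν x (γ x).1 (γ x).2 ≠ 0) →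
      G (fun x => (γ x).2) ≤ F (fun x => (γ x).1)) :
    ∑ δ : X → Bool, (∏ x : X, ∑ a : Bool, ν x a (δ x)) * G δ
      ≤ ∑ δ : X → Bool, (∏ x : X, ∑ b : Bool, ν x (δ x) b) * F δ := by
  rw [← MARG ν F, ← MARG2 ν G]
  refine Finset.sum_le_sum fun γ _ => ?_
  by_cases hz : ∃ x, ν x (γ x).1 (γ x).2 = 0
  · obtain ⟨x0, hx0⟩ := hz
    rw [Finset.prod_eq_zero (Finset.mem_univ x0) hx0]
    simp
  · push_neg at hz
    exact mul_le_mul_of_nonneg_left (hsupp γ hz)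
      (Finset.prod_nonneg fun x _ => hnn x _ _)
end Couple
section LemC
open Finset
open scoped Classical

variable {n t : ℕ} (σ : Fin 2 → Fin n → Hist → (Fin 2 → ℕ) → ℝ) (A : Fin 2 → ℕ)

def ConsW {n t : ℕ} (W : II n t → Bool) (P : XX n → Hist) : Prop :=
  ∀ x : XX n, dig (P x) = (List.range (con (P x))).map (fun ℓ => ltr (wAt W x ℓ))

lemma fin2cases (i : Fin 2) : i = 0 ∨ i = 1 := by
  fin_cases i <;> simp

lemma ConsW_stepD {W : II n t → Bool} {P : XX n → Hist} (δ : XX n → Bool) (h : ConsW W P) :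
    ConsW W (stepD W P δ) := by
  intro x
  have hcs := con_stepD W P δ x
  by_cases hδ : δ x
  · have hd : dig (stepD W P δ x) = dig (P x) ++ [ltr (wAt W x (con (P x)))] := by
      unfold stepD
      rw [show (if δ x then ltr (wAt W x (con (P x))) else Ev.N) = ltr (wAt W x (con (P x))) from by
        rw [if_pos hδ]]
      exact dig_append_ne _ (ltr_ne_N _)
    rw [hd, hcs, if_pos hδ, List.range_succ, List.map_append, ← h x]
    simp
  · have hd : dig (stepD W P δ x) = dig (P x) := by
      unfold stepD
      rw [show (if δ x then ltr (wAt W x (con (P x))) else Ev.N) = Ev.N from by rw [if_neg hδ]]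
      exact dig_append_N _
    rw [hd, hcs, if_neg hδ, Nat.add_zero, h x]

lemma dig_lookup (c : ℕ) (g : ℕ → Ev) (i : ℕ) :
    ((List.range c).map g)[i]? = if i < c then some (g i) else none := by
  rw [List.getElem?_map]
  by_cases h : i < c
  · rw [List.getElem?_eq_getElem (by simpa using h), if_pos h]
    simp
  · rw [List.getElem?_eq_none (by simpa using Nat.le_of_not_lt h), if_neg h]
    rfl

lemma superior_cons {W W' : II n t → Bool} {Z Z' : Hist} {x : XX n}
    (hlen : Z'.length = Z.length) (hcon : con Z' = con Z)
    (hZ : dig Z = (List.range (con Z)).map (fun ℓ => ltr (wAt W x ℓ)))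
    (hZ' : dig Z' = (List.range (con Z')).map (fun ℓ => ltr (wAt W' x ℓ)))
    (hdom : ∀ ℓ : ℕ, wAt W x ℓ = true → wAt W' x ℓ = true) :
    Superior Z' Z := by
  refine ⟨hlen, hcon, fun i => ?_⟩
  rintro ⟨h1, h2⟩
  rw [hZ', dig_lookup] at h1
  rw [hZ, dig_lookup] at h2
  by_cases hi : i < con Z'
  · rw [if_pos hi] at h1
    rw [if_pos (hcon ▸ hi)] at h2
    have hW' : wAt W' x i = false := by
      by_contra hc
      have : wAt W' x i = true := by simpa using hc
      rw [this] at h1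
      simp [ltr] at h1
    have hWW : wAt W x i = false := by
      by_contra hc
      have : wAt W x i = true := by simpa using hc
      have := hdom i this
      rw [this] at hW'
      exact absurd hW' (by simp)
    rw [hWW] at h2
    simp [ltr] at h2
  · rw [if_neg hi] at h1
    exact absurd h1 (by simp)
end LemC
section LemCMain
open Finset
open scoped Classical

variable {n t : ℕ}

lemma lemC (σ : Fin 2 → Fin n → Hist → (Fin 2 → ℕ) → ℝ) (A : Fin 2 → ℕ)
    (hval : ∀ i j Z ω, σ i j Z ω ∈ Set.Icc (0 : ℝ) 1)
    (hmono : ∀ i j, MonotoneStratMS (σ i j))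
    (hherd : ∀ i j, CompWeaklyHerding i (σ i j)) :
    ∀ (r k : ℕ) (W W' : II n t → Bool) (P P' : XX n → Hist),
    (∀ x, (P x).length = k) → (∀ x, (P' x).length = k) → k + r ≤ t →
    ConsW W P → ConsW W' P' →
    (∀ y : II n t, y.1 = 0 → W y = true → W' y = true) →
    (∀ y : II n t, y.1 = 1 → W' y = W y) →
    (∀ j : Fin n, con (P (0, j)) ≤ con (P' (0, j))) →
    (∀ j : Fin n, con (P' (1, j)) ≤ con (P (1, j))) →
    Dval σ A W r P ≤ Dval σ A W' r P' := by
  intro r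
  induction r with
  | zero =>
    intro k W W' P P' _ _ _ _ _ _ _ hcnt0 hcnt1
    show (if shl A P 1 < shl A P 0 then (1:ℝ) else 0) ≤
      (if shl A P' 1 < shl A P' 0 then (1:ℝ) else 0)
    have h0 : shl A P 0 ≤ shl A P' 0 :=
      Nat.add_le_add_left (Finset.sum_le_sum fun j _ => hcnt0 j) _
    have h1 : shl A P' 1 ≤ shl A P 1 :=
      Nat.add_le_add_left (Finset.sum_le_sum fun j _ => hcnt1 j) _
    by_cases hc : shl A P 1 < shl A P 0
    · rw [if_pos hc, if_pos (by omega)]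
    · rw [if_neg hc]
      by_cases hc' : shl A P' 1 < shl A P' 0
      · rw [if_pos hc']; norm_num
      · rw [if_neg hc']
  | succ r ih =>
    intro k W W' P P' hlen hlen' hbound hcons hcons' hW0 hW1 hcnt0 hcnt1
    -- weights
    set p : XX n → ℝ := fun x => σ x.1 x.2 (P x) (shl A P) with hp
    set p' : XX n → ℝ := fun x => σ x.1 x.2 (P' x) (shl A P') with hp'
    have hpv : ∀ x : XX n, 0 ≤ p x ∧ p x ≤ 1 := fun x =>
      ⟨(hval x.1 x.2 _ _).1, (hval x.1 x.2 _ _).2⟩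
    have hpv' : ∀ x : XX n, 0 ≤ p' x ∧ p' x ≤ 1 := fun x =>
      ⟨(hval x.1 x.2 _ _).1, (hval x.1 x.2 _ _).2⟩
    -- share comparisons
    have hsh0 : (shl A P) 0 ≤ (shl A P') 0 :=
      Nat.add_le_add_left (Finset.sum_le_sum fun j _ => hcnt0 j) _
    have hsh1 : (shl A P') 1 ≤ (shl A P) 1 :=
      Nat.add_le_add_left (Finset.sum_le_sum fun j _ => hcnt1 j) _
    -- count inequalities for arbitrary x
    have hcntx0 : ∀ x : XX n, x.1 = (0 : Fin 2) → con (P x) ≤ con (P' x) := by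
      intro x hx
      have : x = (0, x.2) := by
        rw [← hx]
      rw [this]
      exact hcnt0 x.2
    have hcntx1 : ∀ x : XX n, x.1 = (1 : Fin 2) → con (P' x) ≤ con (P x) := by
      intro x hx
      have : x = (1, x.2) := by
        rw [← hx]
      rw [this]
      exact hcnt1 x.2
    -- key probability inequalities in the equal-count case
    have hkey0 : ∀ x : XX n, x.1 = (0 : Fin 2) → con (P' x) = con (P x) → p x ≤ p' x := by
      intro x hx hcx
      have hdom : ∀ ℓ : ℕ, wAt W x ℓ = true → wAt W' x ℓ = true := by
        intro ℓ hℓ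
        unfold wAt at hℓ ⊢
        by_cases hlt : ℓ < t
        · rw [dif_pos hlt] at hℓ ⊢
          exact hW0 (x.1, x.2, ⟨ℓ, hlt⟩) hx hℓ
        · rw [dif_neg hlt]
      have hsup : Superior (P' x) (P x) :=
        superior_cons (by rw [hlen, hlen']) hcx (hcons x) (hcons' x) hdom
      have step1 : σ x.1 x.2 (P x) (shl A P) ≤ σ x.1 x.2 (P' x) (shl A P) :=
        hmono x.1 x.2 (shl A P) (P' x) (P x) hsup
      have step2 : σ x.1 x.2 (P' x) (shl A P) ≤ σ x.1 x.2 (P' x) (shl A P') := by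
        rw [hx] at step1 ⊢
        refine hherd 0 x.2 (P' x) (shl A P) (shl A P') hsh0 ?_
        intro kk hkk
        rcases fin2cases kk with h | h
        · exact absurd h hkk
        · rw [h]; exact hsh1
      exact le_trans step1 step2
    have hkey1 : ∀ x : XX n, x.1 = (1 : Fin 2) → con (P' x) = con (P x) → p' x ≤ p x := by
      intro x hx hcx
      have hdeq : ∀ ℓ : ℕ, wAt W' x ℓ = wAt W x ℓ := by
        intro ℓ
        unfold wAt
        by_cases hlt : ℓ < t
        · rw [dif_pos hlt, dif_pos hlt]
          exact hW1 (x.1, x.2, ⟨ℓ, hlt⟩) hx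
        · rw [dif_neg hlt, dif_neg hlt]
      have hsup1 : Superior (P' x) (P x) :=
        superior_cons (by rw [hlen, hlen']) hcx (hcons x) (hcons' x) (fun ℓ h => (hdeq ℓ) ▸ h)
      have hsup2 : Superior (P x) (P' x) :=
        superior_cons (by rw [hlen, hlen']) hcx.symm (hcons' x) (hcons x) (fun ℓ h => (hdeq ℓ).symm ▸ h)
      have heq : σ x.1 x.2 (P' x) (shl A P') = σ x.1 x.2 (P x) (shl A P') :=
        le_antisymm (hmono x.1 x.2 (shl A P') (P x) (P' x) hsup2)
          (hmono x.1 x.2 (shl A P') (P' x) (P x) hsup1)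
      rw [hp', hp]
      show σ x.1 x.2 (P' x) (shl A P') ≤ σ x.1 x.2 (P x) (shl A P)
      rw [heq, hx]
      refine hherd 1 x.2 (P x) (shl A P') (shl A P) hsh1 ?_
      intro kk hkk
      rcases fin2cases kk with h | h
      · rw [h]; exact hsh0
      · exact absurd h hkk
    -- the coupling
    set ν : XX n → Bool → Bool → ℝ := fun x a b =>
      if con (P' x) = con (P x) then
        (if x.1 = (0 : Fin 2) then
          (if a then (if b then p x else p' x - p x) else (if b then 0 else 1 - p' x))
        else
          (if a then (if b then p' x else 0) else (if b then p x - p' x else 1 - p x)))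
      else dwt (p' x) a * dwt (p x) b with hν
    have hmargFst : ∀ (x : XX n) (a : Bool), (∑ b : Bool, ν x a b) = dwt (p' x) a := by
      intro x a
      rw [Fintype.sum_bool, hν]
      by_cases hcx : con (P' x) = con (P x) <;> by_cases hx0 : x.1 = (0 : Fin 2) <;>
        cases a <;> simp [hcx, hx0, dwt] <;> ring
    have hmargSnd : ∀ (x : XX n) (b : Bool), (∑ a : Bool, ν x a b) = dwt (p x) b := by
      intro x b
      rw [Fintype.sum_bool, hν]
      by_cases hcx : con (P' x) = con (P x) <;> by_cases hx0 : x.1 = (0 : Fin 2) <;>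
        cases b <;> simp [hcx, hx0, dwt] <;> ring
    have hnn : ∀ (x : XX n) (a b : Bool), 0 ≤ ν x a b := by
      intro x a b
      have h01 := hpv x
      have h01' := hpv' x
      simp only [hν]
      by_cases hcx : con (P' x) = con (P x)
      · rw [if_pos hcx]
        by_cases hx0 : x.1 = (0 : Fin 2)
        · rw [if_pos hx0]
          have hle := hkey0 x hx0 hcx
          cases a <;> cases b <;> norm_num <;>
            linarith [h01.1, h01.2, h01'.1, h01'.2]
        · rw [if_neg hx0]
          have hx1 : x.1 = (1 : Fin 2) := by
            rcases fin2cases x.1 with h | h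
            · exact absurd h hx0
            · exact h
          have hle := hkey1 x hx1 hcx
          cases a <;> cases b <;> norm_num <;>
            linarith [h01.1, h01.2, h01'.1, h01'.2]
      · rw [if_neg hcx]
        refine mul_nonneg ?_ ?_
        · cases a <;> simp [dwt] <;> linarith [h01'.1, h01'.2]
        · cases b <;> simp [dwt] <;> linarith [h01.1, h01.2]
    -- support property
    have hsupp : ∀ γ : XX n → Bool × Bool, (∀ x, ν x (γ x).1 (γ x).2 ≠ 0) →
        Dval σ A W r (stepD W P (fun x => (γ x).2))
          ≤ Dval σ A W' r (stepD W' P' (fun x => (γ x).1)) := by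
      intro γ hγ
      refine ih (k+1) W W' (stepD W P (fun x => (γ x).2)) (stepD W' P' (fun x => (γ x).1))
        (fun x => by rw [len_stepD, hlen]) (fun x => by rw [len_stepD, hlen']) (by omega)
        (ConsW_stepD _ hcons) (ConsW_stepD _ hcons') hW0 hW1 ?_ ?_
      · intro j
        rw [con_stepD, con_stepD]
        have hx0 : ((0 : Fin 2), j).1 = (0 : Fin 2) := rfl
        by_cases hcx : con (P' (0, j)) = con (P (0, j))
        · -- here the coupling forbids (false, true)
          have := hγ (0, j)
          simp only [hν] at this
          simp only [hcx, hx0, if_true, ite_true] at this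
          rcases h1 : (γ (0, j)).1 <;> rcases h2 : (γ (0, j)).2 <;>
            rw [h1, h2] at this <;> simp at this ⊢ <;> omega
        · have hlt : con (P (0, j)) < con (P' (0, j)) :=
            lt_of_le_of_ne (hcnt0 j) (fun h => hcx h.symm)
          rcases (γ (0, j)).1 <;> rcases (γ (0, j)).2 <;> simp <;> omega
      · intro j
        rw [con_stepD, con_stepD]
        have hx1 : ((1 : Fin 2), j).1 = (1 : Fin 2) := rfl
        by_cases hcx : con (P' (1, j)) = con (P (1, j))
        · have := hγ (1, j)
          rw [hν] at this
          have hx0 : ¬(((1 : Fin 2), j).1 = (0 : Fin 2)) := by simp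
          simp only [hcx, hx0, if_true, ite_true, if_false, ite_false] at this
          rcases h1 : (γ (1, j)).1 <;> rcases h2 : (γ (1, j)).2 <;>
            rw [h1, h2] at this <;> simp at this ⊢ <;> omega
        · have hlt : con (P' (1, j)) < con (P (1, j)) :=
            lt_of_le_of_ne (hcnt1 j) hcx
          rcases (γ (1, j)).1 <;> rcases (γ (1, j)).2 <;> simp <;> omega
    -- conclude via couple_le
    have hcouple := couple_le ν (fun δ' => Dval σ A W' r (stepD W' P' δ'))
      (fun δ => Dval σ A W r (stepD W P δ)) hnn hsupp
    show (∑ δ : XX n → Bool, (∏ x : XX n, dwt (p x) (δ x)) * Dval σ A W r (stepD W P δ))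
      ≤ ∑ δ : XX n → Bool, (∏ x : XX n, dwt (p' x) (δ x)) * Dval σ A W' r (stepD W' P' δ)
    calc (∑ δ : XX n → Bool, (∏ x : XX n, dwt (p x) (δ x)) * Dval σ A W r (stepD W P δ))
        = ∑ δ : XX n → Bool, (∏ x : XX n, ∑ a : Bool, ν x a (δ x)) * Dval σ A W r (stepD W P δ) := by
          refine Finset.sum_congr rfl fun δ _ => ?_
          congr 1
          exact Finset.prod_congr rfl fun x _ => (hmargSnd x (δ x)).symm
      _ ≤ ∑ δ : XX n → Bool, (∏ x : XX n, ∑ b : Bool, ν x (δ x) b) * Dval σ A W' r (stepD W' P' δ) :=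
          hcouple
      _ = ∑ δ : XX n → Bool, (∏ x : XX n, dwt (p' x) (δ x)) * Dval σ A W' r (stepD W' P' δ) := by
          refine Finset.sum_congr rfl fun δ _ => ?_
          congr 1
          exact Finset.prod_congr rfl fun x _ => hmargFst x (δ x)
end LemCMain
section Dom
open Finset
open scoped Classical

variable {n t : ℕ}

lemma DOM1 (z0 : II n t) (f : II n t → ℝ) (hf : ∀ y : II n t, y ≠ z0 → 0 ≤ f y ∧ f y ≤ 1)
    (aq bq : ℝ) (hab : aq ≤ bq) (D : (II n t → Bool) → ℝ)
    (hD : ∀ W : II n t → Bool, D (Function.update W z0 false) ≤ D (Function.update W z0 true)) :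
    ∑ W : II n t → Bool, μm (Function.update f z0 aq) W * D W
      ≤ ∑ W : II n t → Bool, μm (Function.update f z0 bq) W * D W := by
  have hside : ∀ c : ℝ, ∑ W : II n t → Bool, μm (Function.update f z0 c) W * D W
      = ∑ v : {y : II n t // y ≠ z0} → Bool, (∏ u : {y : II n t // y ≠ z0}, bwt (f u.1) (v u)) *
          (c * D (msplit z0 true v) + (1 - c) * D (msplit z0 false v)) := by
    intro c
    rw [sum_split z0 (fun W => μm (Function.update f z0 c) W * D W), Fintype.sum_bool,
      ← Finset.sum_add_distrib]
    refine Finset.sum_congr rfl fun v _ => ?_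
    rw [μm_msplit, μm_msplit]
    have h1 : Function.update f z0 c z0 = c := Function.update_self _ _ _
    have h2 : (∏ u : {y : II n t // y ≠ z0}, bwt (Function.update f z0 c u.1) (v u))
        = ∏ u : {y : II n t // y ≠ z0}, bwt (f u.1) (v u) :=
      Finset.prod_congr rfl fun u _ => by rw [Function.update_of_ne u.2]
    rw [h1, h2]
    have hbt : bwt c true = c := by simp [bwt]
    have hbf : bwt c false = 1 - c := by simp [bwt]
    rw [hbt, hbf]
    ring
  rw [hside aq, hside bq]
  refine Finset.sum_le_sum fun v _ => ?_
  have hprod : 0 ≤ ∏ u : {y : II n t // y ≠ z0}, bwt (f u.1) (v u) :=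
    Finset.prod_nonneg fun u _ =>
      bwt_nonneg (Set.mem_Icc.mpr ⟨(hf u.1 u.2).1, (hf u.1 u.2).2⟩) _
  have hDD : D (msplit z0 false v) ≤ D (msplit z0 true v) := by
    have e1 : msplit z0 false v = Function.update (msplit z0 true v) z0 false :=
      msplit_update z0 true false v
    have e2 : msplit z0 true v = Function.update (msplit z0 true v) z0 true :=
      msplit_update z0 true true v
    rw [e1]
    nth_rewrite 2 [e2]
    exact hD _
  have hinner : aq * D (msplit z0 true v) + (1 - aq) * D (msplit z0 false v)
      ≤ bq * D (msplit z0 true v) + (1 - bq) * D (msplit z0 false v) := by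
    nlinarith [mul_nonneg (sub_nonneg.mpr hab) (sub_nonneg.mpr hDD)]
  exact mul_le_mul_of_nonneg_left hinner hprod

lemma DOM (σ : Fin 2 → Fin n → Hist → (Fin 2 → ℕ) → ℝ) (A : Fin 2 → ℕ)
    (hval : ∀ i j Z ω, σ i j Z ω ∈ Set.Icc (0 : ℝ) 1)
    (hmono : ∀ i j, MonotoneStratMS (σ i j))
    (hherd : ∀ i j, CompWeaklyHerding i (σ i j))
    (q q' : Fin 2 → ℝ)
    (hq : ∀ i, q i ∈ Set.Icc (0 : ℝ) 1) (hq' : ∀ i, q' i ∈ Set.Icc (0 : ℝ) 1)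
    (hfix : q 1 = q' 1) (hle : q 0 ≤ q' 0) :
    ∑ W : II n t → Bool, μm (fun y : II n t => q y.1) W * Dval σ A W t (fun _ => ([] : Hist))
      ≤ ∑ W : II n t → Bool, μm (fun y : II n t => q' y.1) W * Dval σ A W t (fun _ => ([] : Hist)) := by
  set D : (II n t → Bool) → ℝ := fun W => Dval σ A W t (fun _ => ([] : Hist)) with hDdef
  -- monotonicity of D in a single product-0 coordinate
  have hconsnil : ∀ W : II n t → Bool, ConsW W (fun _ : XX n => ([] : Hist)) := by
    intro W x
    simp [dig, con]
  have hDmono : ∀ z0 : II n t, z0.1 = 0 →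
      ∀ W : II n t → Bool, D (Function.update W z0 false) ≤ D (Function.update W z0 true) := by
    intro z0 hz0 W
    refine lemC σ A hval hmono hherd t 0 (Function.update W z0 false) (Function.update W z0 true)
      (fun _ => ([] : Hist)) (fun _ => ([] : Hist)) (fun x => rfl) (fun x => rfl) (by omega)
      (hconsnil _) (hconsnil _) ?_ ?_ (fun j => le_refl _) (fun j => le_refl _)
    · intro y _ hy
      by_cases h : y = z0
      · subst h
        rw [Function.update_self]
      · rw [Function.update_of_ne h] at hy ⊢
        exact hy
    · intro y hy1
      have h : y ≠ z0 := fun hh => by rw [hh, hz0] at hy1; exact absurd hy1 (by decide)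
      rw [Function.update_of_ne h, Function.update_of_ne h]
  -- interpolation over product-0 coordinates
  set fS : Finset (Fin n × Fin t) → II n t → ℝ :=
    fun S y => if y.1 = 0 ∧ y.2 ∈ S then q' 0 else q y.1 with hfS
  have hstep : ∀ S : Finset (Fin n × Fin t),
      ∑ W : II n t → Bool, μm (fun y : II n t => q y.1) W * D W
        ≤ ∑ W : II n t → Bool, μm (fS S) W * D W := by
    intro S
    induction S using Finset.induction with
    | empty =>
      have : fS ∅ = fun y : II n t => q y.1 := by
        funext y
        simp [hfS]
      rw [this]
    | insert z S hzS ihS =>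
      refine le_trans ihS ?_
      have h1 : fS (insert z S) = Function.update (fS S) ((0 : Fin 2), z) (q' 0) := by
        funext y
        by_cases h : y = ((0 : Fin 2), z)
        · subst h
          rw [Function.update_self]
          simp [hfS]
        · rw [Function.update_of_ne h]
          simp only [hfS]
          by_cases hy0 : y.1 = 0
          · have hyz : y.2 ≠ z := by
              intro hh
              exact h (Prod.ext hy0 hh)
            simp [hy0, hyz, Finset.mem_insert]
          · simp [hy0]
      have h2 : fS S = Function.update (fS S) ((0 : Fin 2), z) (q 0) := by
        funext y
        by_cases h : y = ((0 : Fin 2), z)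
        · subst h
          rw [Function.update_self]
          simp [hfS, hzS]
        · rw [Function.update_of_ne h]
      rw [h1]
      nth_rewrite 1 [h2]
      refine DOM1 ((0 : Fin 2), z) (fS S) ?_ (q 0) (q' 0) hle D (hDmono _ rfl)
      intro y _
      simp only [hfS]
      by_cases hc : y.1 = 0 ∧ y.2 ∈ S
      · rw [if_pos hc]
        exact ⟨(hq' 0).1, (hq' 0).2⟩
      · rw [if_neg hc]
        exact ⟨(hq y.1).1, (hq y.1).2⟩
  have hfinal : fS Finset.univ = fun y : II n t => q' y.1 := by
    funext y
    simp only [hfS]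
    rcases fin2cases y.1 with h | h
    · simp [h]
    · simp [h, hfix.symm]
  have := hstep Finset.univ
  rw [hfinal] at this
  exact this
end Dom
/-- with `m = 2` products and monotone, competitively weakly
herding customers, the probability that product 1's market share strictly
exceeds product 2's after round `t` is non-decreasing in `q₁`, holding `q₂`
fixed. -/
theorem share_lead_monotone_comp_weak_herding (n t : ℕ) (A : Fin 2 → ℕ)
    (σ : Fin 2 → Fin n → Hist → (Fin 2 → ℕ) → ℝ)
    (hval : ∀ i j Z ω, σ i j Z ω ∈ Set.Icc (0 : ℝ) 1)
    (hmono : ∀ i j, MonotoneStratMS (σ i j))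
    (hherd : ∀ i j, CompWeaklyHerding i (σ i j))
    (q q' : Fin 2 → ℝ)
    (hq : ∀ i, q i ∈ Set.Icc (0 : ℝ) 1) (hq' : ∀ i, q' i ∈ Set.Icc (0 : ℝ) 1)
    (hfix : q 1 = q' 1) (hle : q 0 ≤ q' 0) :
    (∑ Z : Ens 2 n t,
        if shareAt Z A t 1 < shareAt Z A t 0 then ensProb σ q A Z else 0) ≤
    (∑ Z : Ens 2 n t,
        if shareAt Z A t 1 < shareAt Z A t 0 then ensProb σ q' A Z else 0) := by
  rw [lemA A σ q, lemA A σ q']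
  rw [lemB (n := n) (t := t) σ q A t 0 (fun _ => ([] : Hist)) (fun _ => rfl) (by omega)]
  rw [lemB (n := n) (t := t) σ q' A t 0 (fun _ => ([] : Hist)) (fun _ => rfl) (by omega)]
  exact DOM σ A hval hmono hherd q q' hq hq' hfix hle
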